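/- Let (w_1,...,w_n) be a minimal lace diagram for (e_0,...,e_n). Then for all i with 1 <= i <= n-1 and all j with 1 <= j < e_i, it is impossible that both w_i(j) > w_i(j+1) and w_{i+1}^{-1}(j) > w_{i+1}^{-1}(j+1) hold. -/

import Mathlib

open MvPolynomial

/-! Common setup.  Dots in columns, positions in permutations, and variable
indices are all 0-indexed: dot `q` (0-indexed) of column `i` is dot `q+1`
(1-indexed) in the paper, the variable `(i, j) : ℕ × ℕ` is the Chern root
`x^i_{j+1}`, and in the Schubert variable type `ℕ ⊕ ℕ`, `Sum.inl a` is
`x_{a+1}` and `Sum.inr b` is `y_{b+1}`. -/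

/-- Coxeter length = number of inversions of a (finitely supported) permutation of ℕ. -/
noncomputable def ell (w : Equiv.Perm ℕ) : ℕ :=
  {p : ℕ × ℕ | p.1 < p.2 ∧ w p.2 < w p.1}.ncard

/-- A finitely supported permutation of ℕ. -/
def FinSupp (w : Equiv.Perm ℕ) : Prop := {x | w x ≠ x}.Finite

/-- A lace diagram for the dimension vector `e 0, …, e n`, encoded as a sequence
`w 1, …, w n` of finitely supported permutations of ℕ (normalized so that
`w i = 1` outside `1 ≤ i ≤ n`): all descent positions of `w i` are `< e i` and
all descent positions of `(w i)⁻¹` are `< e (i-1)` (0-indexed positions). -/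
def IsLace (n : ℕ) (e : ℕ → ℕ) (w : ℕ → Equiv.Perm ℕ) : Prop :=
  (∀ i, i = 0 ∨ n < i → w i = 1) ∧
  ∀ i, 1 ≤ i → i ≤ n → FinSupp (w i) ∧
    (∀ k, w i (k + 1) < w i k → k < e i) ∧
    (∀ k, (w i)⁻¹ (k + 1) < (w i)⁻¹ k → k < e (i - 1))

/-- `chain w i k p = (w k)⁻¹ (⋯ ((w (i+1))⁻¹ p))` for `k ≥ i`, and `p` for `k ≤ i`. -/
def chain (w : ℕ → Equiv.Perm ℕ) (i : ℕ) : ℕ → ℕ → ℕ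
  | 0, p => p
  | k + 1, p => if k + 1 ≤ i then p else (w (k + 1))⁻¹ (chain w i k p)

/-- The rank conditions of a lace diagram: `rank e w i j` is the number of dots
`p < e i` of column `i` whose strand continues through column `j`. -/
noncomputable def rank (e : ℕ → ℕ) (w : ℕ → Equiv.Perm ℕ) (i j : ℕ) : ℕ :=
  {p : ℕ | p < e i ∧ ∀ k, i < k → k ≤ j → chain w i k p < e k}.ncard

/-- The lace diagram `w` has rank conditions `r` (for `0 ≤ i ≤ j ≤ n`). -/
def RankEq (n : ℕ) (e : ℕ → ℕ) (w : ℕ → Equiv.Perm ℕ) (r : ℕ → ℕ → ℕ) : Prop :=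
  ∀ i j, i ≤ j → j ≤ n → rank e w i j = r i j

/-- The length of a lace diagram. -/
noncomputable def diagLength (n : ℕ) (w : ℕ → Equiv.Perm ℕ) : ℕ :=
  ∑ i ∈ Finset.Icc 1 n, ell (w i)

/-- The expected codimension `d(r)`. -/
def codim (n : ℕ) (r : ℕ → ℕ → ℕ) : ℕ :=
  ∑ i ∈ Finset.range (n + 1), ∑ j ∈ Finset.range (n + 1),
    if i < j then (r i (j - 1) - r i j) * (r (i + 1) j - r i j) else 0

/-- A minimal lace diagram: its length equals the expected codimension of its
rank conditions. -/
def IsMinimal (n : ℕ) (e : ℕ → ℕ) (w : ℕ → Equiv.Perm ℕ) : Prop :=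
  IsLace n e w ∧ diagLength n w = codim n (rank e w)

/-- The longest element of `S m` (0-indexed), as a permutation of ℕ. -/
def longest (m : ℕ) : Equiv.Perm ℕ where
  toFun i := if i < m then m - 1 - i else i
  invFun i := if i < m then m - 1 - i else i
  left_inv i := by dsimp only; split_ifs <;> omega
  right_inv i := by dsimp only; split_ifs <;> omega

/-- Interchanging the x-variables `x (i+1)` and `x (i+2)` (0-indexed: `inl i`
and `inl (i+1)`). -/
noncomputable def sX (i : ℕ) (f : MvPolynomial (ℕ ⊕ ℕ) ℤ) : MvPolynomial (ℕ ⊕ ℕ) ℤ :=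
  rename (Sum.map (Equiv.swap i (i + 1)) id) f

/-- `S` is the family of double Schubert polynomials `S w = 𝔖_w(x; y)`:
it takes the prescribed product value on each longest element, it satisfies the
divided difference recursion `(x i - x (i+1)) * S (w * s i) = S w - (S w)^{s i}`
when `w` has a descent at `i` and `(S w)^{s i} = S w` otherwise, and only the
variables up to the last descents of `w` and `w⁻¹` occur in `S w`. -/
def IsSchubertFamily (S : Equiv.Perm ℕ → MvPolynomial (ℕ ⊕ ℕ) ℤ) : Prop :=
  (∀ m : ℕ, S (longest m) =
      ∏ i ∈ Finset.range m, ∏ j ∈ Finset.range m,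
        if i + j + 2 ≤ m then X (Sum.inl i) - X (Sum.inr j) else 1) ∧
  (∀ w : Equiv.Perm ℕ, FinSupp w → ∀ i : ℕ,
    (w (i + 1) < w i →
      (X (Sum.inl i) - X (Sum.inl (i + 1))) * S (w * Equiv.swap i (i + 1)) =
        S w - sX i (S w)) ∧
    (w i < w (i + 1) → sX i (S w) = S w)) ∧
  (∀ w : Equiv.Perm ℕ, FinSupp w → ∀ k l : ℕ,
    (∀ t, k ≤ t → ¬w (t + 1) < w t) → (∀ t, l ≤ t → ¬w⁻¹ (t + 1) < w⁻¹ t) →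
    ∀ v ∈ (S w).vars, (∃ a < k, v = Sum.inl a) ∨ (∃ b < l, v = Sum.inr b))

/-- The product `S(w) = 𝔖_{w 1}(x^1;x^0) ⋯ 𝔖_{w n}(x^n;x^{n-1})`, in the
variables `(i, j) = x^i_{j+1}`. -/
noncomputable def Sprod (n : ℕ) (S : Equiv.Perm ℕ → MvPolynomial (ℕ ⊕ ℕ) ℤ)
    (w : ℕ → Equiv.Perm ℕ) : MvPolynomial (ℕ × ℕ) ℤ :=
  ∏ i ∈ Finset.Icc 1 n,
    rename (Sum.elim (fun a => (i, a)) (fun b => (i - 1, b))) (S (w i))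

/-- The component-formula polynomial `Q_r`: the sum of `Sprod n S w` over all
minimal lace diagrams `w` with rank conditions `r`. -/
noncomputable def Qpoly (n : ℕ) (e : ℕ → ℕ) (r : ℕ → ℕ → ℕ)
    (S : Equiv.Perm ℕ → MvPolynomial (ℕ ⊕ ℕ) ℤ) : MvPolynomial (ℕ × ℕ) ℤ :=
  ∑ᶠ (w : ℕ → Equiv.Perm ℕ) (_ : IsMinimal n e w ∧ RankEq n e w r), Sprod n S w

/-- The shifted permutation `1^k × w`: fixes `0, …, k-1` (0-indexed) and sends
`k + j` to `k + w j`. -/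
def shiftPerm (k : ℕ) (w : Equiv.Perm ℕ) : Equiv.Perm ℕ where
  toFun j := if j < k then j else w (j - k) + k
  invFun j := if j < k then j else w⁻¹ (j - k) + k
  left_inv j := by
    dsimp only
    by_cases h : j < k
    · simp [h]
    · have h1 : ¬ w (j - k) + k < k := by omega
      simp only [if_neg h, if_neg h1, Nat.add_sub_cancel, Equiv.Perm.inv_def, Equiv.symm_apply_apply]
      omega
  right_inv j := by
    dsimp only
    by_cases h : j < k
    · simp [h]
    · have h1 : ¬ w⁻¹ (j - k) + k < k := by omega
      simp only [if_neg h, if_neg h1, Nat.add_sub_cancel, ← Equiv.Perm.mul_apply, mul_inv_cancel,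
        Equiv.Perm.one_apply]
      omega

/-- The lace diagram `(1^k × w 1, …, 1^k × w n)`. -/
def shiftDiag (k : ℕ) (w : ℕ → Equiv.Perm ℕ) : ℕ → Equiv.Perm ℕ :=
  fun i => shiftPerm k (w i)

/-- The transformation of lace diagrams, allowed at `(i, j)` (0-indexed `j`,
so `j + 1 < e i`) when exactly one of the two descent conditions holds; it
replaces `w i` by `w i * s j` and `w (i+1)` by `s j * w (i+1)`. -/
def TransStep (n : ℕ) (e : ℕ → ℕ) (w w' : ℕ → Equiv.Perm ℕ) : Prop :=
  IsLace n e w ∧ ∃ i j, 1 ≤ i ∧ i + 1 ≤ n ∧ j + 1 < e i ∧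
    Xor' (w i (j + 1) < w i j) ((w (i + 1))⁻¹ (j + 1) < (w (i + 1))⁻¹ j) ∧
    w' = Function.update (Function.update w i (w i * Equiv.swap j (j + 1))) (i + 1)
          (Equiv.swap j (j + 1) * w (i + 1))

/-- The column where the strand through dot `q` of column `c` starts. -/
def startCol (e : ℕ → ℕ) (w : ℕ → Equiv.Perm ℕ) : ℕ → ℕ → ℕ
  | 0, _ => 0
  | c + 1, q => if w (c + 1) q < e c then startCol e w c (w (c + 1) q) else c + 1

/-- The starting dot `(column, position)` of the strand through dot `q` of column `c`. -/
def startDot (e : ℕ → ℕ) (w : ℕ → Equiv.Perm ℕ) : ℕ → ℕ → ℕ × ℕ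
  | 0, q => (0, q)
  | c + 1, q => if w (c + 1) q < e c then startDot e w c (w (c + 1) q) else (c + 1, q)

def endColAux (e : ℕ → ℕ) (w : ℕ → Equiv.Perm ℕ) : ℕ → ℕ → ℕ → ℕ
  | 0, c, _ => c
  | f + 1, c, q =>
      if (w (c + 1))⁻¹ q < e (c + 1) then endColAux e w f (c + 1) ((w (c + 1))⁻¹ q) else c

/-- The column where the strand through dot `q` of column `c` terminates. -/
def endCol (n : ℕ) (e : ℕ → ℕ) (w : ℕ → Equiv.Perm ℕ) (c q : ℕ) : ℕ :=
  endColAux e w (n - c) c q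

/-- `w` is the left-most lace diagram (for its rank conditions): it is a lace
diagram such that in every column the strands are sorted from top to bottom by
starting column (ascending) and then by terminating column (descending), exactly
as produced by the construction which adds, for `i = 0, …, n` and `j = n, …, i`,
all strands from column `i` to column `j` to the bottom of the diagram; and
strands with the same start and end do not cross. -/
def IsLeftmost (n : ℕ) (e : ℕ → ℕ) (w : ℕ → Equiv.Perm ℕ) : Prop :=
  IsLace n e w ∧
  (∀ c, c ≤ n → ∀ q q', q < q' → q' < e c →
    startCol e w c q < startCol e w c q' ∨
      (startCol e w c q = startCol e w c q' ∧ endCol n e w c q' ≤ endCol n e w c q)) ∧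
  (∀ c, 1 ≤ c → c ≤ n → ∀ q q', q < q' → q' < e c →
    startCol e w c q = startCol e w c q' → endCol n e w c q = endCol n e w c q' →
    w c q < w c q')

/-- The substitution homomorphism `φ_u` of a lace diagram `u`: it sends the
variable `x^i_j` to the variable `b_S` of the strand `S` of `u` through dot
`(i, j)`, where the strand variables are realized as the variables indexed by
the starting dots of strands. -/
noncomputable def phiMap (e : ℕ → ℕ) (u : ℕ → Equiv.Perm ℕ) :
    MvPolynomial (ℕ × ℕ) ℤ →ₐ[ℤ] MvPolynomial (ℕ × ℕ) ℤ :=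
  rename fun p => startDot e u p.1 p.2

/-- The product of the simple transpositions `s (i+1)` (1-indexed) for `i` in `l`. -/
def wordProd (l : List ℕ) : Equiv.Perm ℕ := (l.map fun i => Equiv.swap i (i + 1)).prod

/-- A reduced word for a finitely supported permutation of ℕ. -/
def IsReducedWord (u : Equiv.Perm ℕ) (l : List ℕ) : Prop :=
  wordProd l = u ∧ l.length = ell u

/-- Bruhat order: some reduced word for `u` contains a subword which is a
reduced word for `w`. -/
def BruhatLE (w u : Equiv.Perm ℕ) : Prop :=
  ∃ l l', IsReducedWord u l ∧ IsReducedWord w l' ∧ l'.Sublist l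


/-!
Any sequence `w` of finitely supported permutations has length at least `d(r(w))`. For `i < j`,
a strand present in columns `i, …, j - 1` but not `j` and a strand present in columns
`i + 1, …, j` but not `i` lie in one order in column `i` and in the other in column `j`, so they
form an inversion of some `w_k` with `i < k ≤ j`; this inversion determines the pair, and there
are `(r_{i,j-1} - r_{ij}) (r_{i+1,j} - r_{ij})` such pairs.

If `w_i` had a descent at `j` and `w_{i+1}⁻¹` too, then `(…, w_i s_j, s_j w_{i+1}, …)` would have
the same rank conditions (`s_j` only permutes dots of column `i`) and length `d(r) - 2`,
contradicting the bound.
-/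

theorem Nat.exists_between_not_and_succ {p : ℕ → Prop} {i j : ℕ} (hij : i ≤ j) (hi : ¬p i)
    (hj : p j) : ∃ k, i ≤ k ∧ k < j ∧ ¬p k ∧ p (k + 1) := by
  induction j, hij using Nat.le_induction with
  | base => exact absurd hj hi
  | succ m him ih =>
    by_cases hm : p m
    · obtain ⟨k, hik, hkm, hk⟩ := ih hm
      exact ⟨k, hik, by omega, hk⟩
    · exact ⟨m, him, by omega, hm, hj⟩

theorem Set.encard_setOf_fst_mem_snd_mem {ι α : Type*} (s : Finset ι)
    (t : ι → Set α) :
    {p : ι × α | p.1 ∈ s ∧ p.2 ∈ t p.1}.encard = ∑ i ∈ s, (t i).encard := by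
  classical
  induction s using Finset.induction_on with
  | empty => simp
  | insert a s ha ih =>
    have hsplit : {p : ι × α | p.1 ∈ insert a s ∧ p.2 ∈ t p.1} =
        {a} ×ˢ t a ∪ {p : ι × α | p.1 ∈ s ∧ p.2 ∈ t p.1} := by
      ext ⟨i, x⟩
      simp only [Finset.mem_insert, Set.mem_ofPred_eq, Set.mem_union, Set.mem_prod,
        Set.mem_singleton_iff]
      constructor
      · rintro ⟨rfl | hi, hx⟩
        exacts [Or.inl ⟨rfl, hx⟩, Or.inr ⟨hi, hx⟩]
      · rintro (⟨rfl, hx⟩ | ⟨hi, hx⟩)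
        exacts [⟨Or.inl rfl, hx⟩, ⟨Or.inr hi, hx⟩]
    have hdisj : Disjoint ({a} ×ˢ t a) {p : ι × α | p.1 ∈ s ∧ p.2 ∈ t p.1} :=
      Set.disjoint_left.2 fun p hp hp' => ha (Set.mem_singleton_iff.1 hp.1 ▸ hp'.1)
    rw [hsplit, Set.encard_union_eq hdisj, Set.encard_prod, Set.encard_singleton, one_mul, ih,
      Finset.sum_insert ha]

theorem Set.finite_setOf_fst_mem_snd_mem {ι α : Type*} (s : Finset ι)
    (t : ι → Set α) (ht : ∀ i ∈ s, (t i).Finite) :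
    {p : ι × α | p.1 ∈ s ∧ p.2 ∈ t p.1}.Finite := by
  rw [← Set.encard_lt_top_iff, Set.encard_setOf_fst_mem_snd_mem, ENat.sum_lt_top]
  exact fun i hi => (ht i hi).encard_lt_top

theorem Set.ncard_setOf_fst_mem_snd_mem {ι α : Type*} (s : Finset ι)
    (t : ι → Set α) (ht : ∀ i ∈ s, (t i).Finite) :
    {p : ι × α | p.1 ∈ s ∧ p.2 ∈ t p.1}.ncard = ∑ i ∈ s, (t i).ncard := by
  apply Nat.cast_injective (R := ℕ∞)
  rw [(Set.finite_setOf_fst_mem_snd_mem s t ht).cast_ncard_eq, Set.encard_setOf_fst_mem_snd_mem,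
    Nat.cast_sum]
  exact Finset.sum_congr rfl fun i hi => (ht i hi).cast_ncard_eq.symm

def inversions (w : Equiv.Perm ℕ) : Set (ℕ × ℕ) := {p | p.1 < p.2 ∧ w p.2 < w p.1}

theorem ell_eq_ncard_inversions (w : Equiv.Perm ℕ) : ell w = (inversions w).ncard := rfl

theorem ncard_preimage_equiv {α β : Type*} (f : α ≃ β) (s : Set β) : (f ⁻¹' s).ncard = s.ncard :=
  Set.ncard_preimage_of_injective_subset_range f.injective (by simp)

namespace FinSupp

variable {u v w : Equiv.Perm ℕ}

theorem exists_forall_ge_eq (hw : FinSupp w) : ∃ N, ∀ x, N ≤ x → w x = x := by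
  obtain ⟨N, hN⟩ := hw.bddAbove
  exact ⟨N + 1, fun x hx => not_not.1 fun hne => absurd (hN hne) (by omega)⟩

theorem finite_inversions (hw : FinSupp w) : (inversions w).Finite := by
  obtain ⟨N, hN⟩ := hw.exists_forall_ge_eq
  refine ((Set.finite_Iio N).prod (Set.finite_Iio N)).subset ?_
  rintro ⟨a, b⟩ hp
  obtain ⟨hab, hwab⟩ : a < b ∧ w b < w a := hp
  have hb : b < N := by
    by_contra hbN
    have hwb := hN b (by omega)
    have hwa : w a = a := w.injective (hN (w a) (by omega))
    omega
  exact ⟨show a < N by omega, hb⟩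

theorem mul (hu : FinSupp u) (hv : FinSupp v) : FinSupp (u * v) :=
  (hu.union hv).subset fun x hx => by
    by_contra h
    simp only [Set.mem_union, Set.mem_ofPred_eq, not_or, not_not] at h
    exact hx (by simp [h.1, h.2])

theorem inv (hw : FinSupp w) : FinSupp w⁻¹ :=
  hw.subset fun _ hx hwx => hx (Equiv.Perm.inv_eq_iff_eq.2 hwx.symm)

theorem swap (a b : ℕ) : FinSupp (Equiv.swap a b) :=
  (Set.toFinite {a, b}).subset fun x hx => by
    by_contra h
    simp only [Set.mem_insert_iff, Set.mem_singleton_iff, not_or] at h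
    exact hx (Equiv.swap_apply_of_ne_of_ne h.1 h.2)

end FinSupp

theorem ell_inv (w : Equiv.Perm ℕ) : ell w⁻¹ = ell w := by
  have h : inversions w⁻¹ = ((Equiv.prodComm ℕ ℕ).trans (w⁻¹.prodCongr w⁻¹)) ⁻¹' inversions w := by
    ext ⟨a, b⟩
    simp [inversions, and_comm]
  rw [ell_eq_ncard_inversions, h, ncard_preimage_equiv, ell_eq_ncard_inversions]

theorem ell_mul_swap_add_one {w : Equiv.Perm ℕ} (hw : FinSupp w) {j : ℕ} (hd : w (j + 1) < w j) :
    ell (w * Equiv.swap j (j + 1)) + 1 = ell w := by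
  set s := Equiv.swap j (j + 1)
  have h : inversions (w * s) = (s.prodCongr s) ⁻¹' (inversions w \ {(j, j + 1)}) := by
    ext ⟨a, b⟩
    simp only [inversions, Set.mem_ofPred_eq, Set.mem_preimage, Set.mem_sdiff,
      Set.mem_singleton_iff, Equiv.prodCongr_apply, Prod.map, Equiv.Perm.mul_apply, Prod.mk.injEq]
    simp only [s, Equiv.swap_apply_def]
    split_ifs <;> omega
  rw [ell_eq_ncard_inversions, h, ncard_preimage_equiv, ell_eq_ncard_inversions,
    Set.ncard_sdiff_singleton_add_one (show (j, j + 1) ∈ inversions w from ⟨by omega, hd⟩)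
      hw.finite_inversions]

theorem ell_swap_mul_add_one {w : Equiv.Perm ℕ} (hw : FinSupp w) {j : ℕ}
    (hd : w⁻¹ (j + 1) < w⁻¹ j) : ell (Equiv.swap j (j + 1) * w) + 1 = ell w := by
  rw [← ell_inv, mul_inv_rev, Equiv.swap_inv, ell_mul_swap_add_one hw.inv hd, ell_inv]

theorem swap_succ_apply_lt_iff {j m x : ℕ} (hj : j + 1 < m) :
    Equiv.swap j (j + 1) x < m ↔ x < m := by
  simp only [Equiv.swap_apply_def]
  split_ifs <;> omega

/-- `strandPos w k x` is the position in column `k` of the strand labelled `x`, strands being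
labelled by their positions in a virtual column `0` that carries all of `ℕ`. -/
def strandPos (w : ℕ → Equiv.Perm ℕ) : ℕ → Equiv.Perm ℕ
  | 0 => 1
  | k + 1 => (w (k + 1))⁻¹ * strandPos w k

theorem strandPos_succ_apply (w : ℕ → Equiv.Perm ℕ) (k x : ℕ) :
    strandPos w (k + 1) x = (w (k + 1))⁻¹ (strandPos w k x) := rfl

theorem chain_strandPos (w : ℕ → Equiv.Perm ℕ) {a k : ℕ} (hak : a ≤ k) (x : ℕ) :
    chain w a k (strandPos w a x) = strandPos w k x := by
  induction k, hak using Nat.le_induction with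
  | base => cases a <;> simp [chain]
  | succ k hak ih => simp [chain, ih, strandPos_succ_apply, show ¬k + 1 ≤ a by omega]

section Strands

variable (e : ℕ → ℕ) (w : ℕ → Equiv.Perm ℕ)

def aliveOn (a b : ℕ) : Set ℕ := {x | ∀ k, a ≤ k → k ≤ b → strandPos w k x < e k}

theorem aliveOn_anti {a a' b b' : ℕ} (ha : a ≤ a') (hb : b' ≤ b) :
    aliveOn e w a b ⊆ aliveOn e w a' b' :=
  fun _ hx k hak hkb => hx k (ha.trans hak) (hkb.trans hb)

theorem aliveOn_finite {a b : ℕ} (hab : a ≤ b) : (aliveOn e w a b).Finite :=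
  ((Set.finite_Iio (e a)).preimage (strandPos w a).injective.injOn).subset
    fun _ hx => hx a le_rfl hab

theorem rank_eq_ncard_aliveOn {a b : ℕ} (hab : a ≤ b) :
    rank e w a b = (aliveOn e w a b).ncard := by
  have h : aliveOn e w a b =
      strandPos w a ⁻¹' {p | p < e a ∧ ∀ k, a < k → k ≤ b → chain w a k p < e k} := by
    ext x
    simp only [aliveOn, Set.mem_preimage, Set.mem_ofPred_eq]
    constructor
    · intro hx
      exact ⟨hx a le_rfl hab, fun k hak hkb => chain_strandPos w hak.le x ▸ hx k hak.le hkb⟩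
    · rintro ⟨hxa, hx⟩ k hak hkb
      rcases hak.eq_or_lt with rfl | hak
      · exact hxa
      · exact chain_strandPos w hak.le x ▸ hx k hak hkb
  rw [rank, h, ncard_preimage_equiv]

def dieSet (i j : ℕ) : Set ℕ := aliveOn e w i (j - 1) \ aliveOn e w i j

def bornSet (i j : ℕ) : Set ℕ := aliveOn e w (i + 1) j \ aliveOn e w i j

variable {e w}

theorem ncard_dieSet {i j : ℕ} (hij : i < j) :
    (dieSet e w i j).ncard = rank e w i (j - 1) - rank e w i j := by
  rw [dieSet,
    Set.ncard_sdiff (aliveOn_anti e w le_rfl (Nat.sub_le j 1)) (aliveOn_finite e w hij.le),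
    rank_eq_ncard_aliveOn e w (by omega : i ≤ j - 1), rank_eq_ncard_aliveOn e w hij.le]

theorem ncard_bornSet {i j : ℕ} (hij : i < j) :
    (bornSet e w i j).ncard = rank e w (i + 1) j - rank e w i j := by
  rw [bornSet,
    Set.ncard_sdiff (aliveOn_anti e w (Nat.le_succ i) le_rfl) (aliveOn_finite e w hij.le),
    rank_eq_ncard_aliveOn e w hij, rank_eq_ncard_aliveOn e w hij.le]

theorem le_strandPos_of_mem_dieSet {i j x : ℕ} (hx : x ∈ dieSet e w i j) :
    e j ≤ strandPos w j x :=
  not_lt.1 fun h => hx.2 fun k hik hkj =>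
    (eq_or_lt_of_le hkj).elim (fun hk => hk ▸ h) fun hk => hx.1 k hik (by omega)

theorem le_strandPos_of_mem_bornSet {i j x : ℕ} (hx : x ∈ bornSet e w i j) :
    e i ≤ strandPos w i x :=
  not_lt.1 fun h => hx.2 fun k hik hkj =>
    (eq_or_lt_of_le hik).elim (fun hk => hk ▸ h) fun hk => hx.1 k hk hkj

theorem eq_of_mem_bornSet {i j i' j' x : ℕ} (hx : x ∈ bornSet e w i j) (hx' : x ∈ bornSet e w i' j')
    (hij' : i < j') (hi'j : i' < j) : i = i' := by
  by_contra hne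
  rcases lt_or_gt_of_ne hne with h | h
  · exact absurd (hx.1 i' h hi'j.le) (not_lt.2 (le_strandPos_of_mem_bornSet hx'))
  · exact absurd (hx'.1 i h hij'.le) (not_lt.2 (le_strandPos_of_mem_bornSet hx))

theorem eq_of_mem_dieSet {i j j' x : ℕ} (hx : x ∈ dieSet e w i j) (hx' : x ∈ dieSet e w i j')
    (hij : i ≤ j) (hij' : i ≤ j') : j = j' := by
  by_contra hne
  rcases lt_or_gt_of_ne hne with h | h
  · exact absurd (hx'.1 j hij (by omega)) (not_lt.2 (le_strandPos_of_mem_dieSet hx))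
  · exact absurd (hx.1 j' hij' (by omega)) (not_lt.2 (le_strandPos_of_mem_dieSet hx'))

theorem exists_inversion_of_mem_dieSet_of_mem_bornSet {i j s t : ℕ} (hij : i < j)
    (hs : s ∈ dieSet e w i j) (ht : t ∈ bornSet e w i j) :
    ∃ k, i ≤ k ∧ k < j ∧
      (strandPos w (k + 1) t, strandPos w (k + 1) s) ∈ inversions (w (k + 1)) := by
  have hsi : strandPos w i s < e i := hs.1 i le_rfl (by omega)
  have htj : strandPos w j t < e j := ht.1 j (by omega) le_rfl
  have hti : e i ≤ strandPos w i t := le_strandPos_of_mem_bornSet ht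
  have hsj : e j ≤ strandPos w j s := le_strandPos_of_mem_dieSet hs
  obtain ⟨k, hik, hkj, hk, hk1⟩ := Nat.exists_between_not_and_succ (p := fun k =>
    strandPos w k t < strandPos w k s) hij.le (by omega) (by omega)
  have hst : strandPos w k s ≠ strandPos w k t :=
    (strandPos w k).injective.ne fun h => by subst h; omega
  refine ⟨k, hik, hkj, hk1, ?_⟩
  simp only [strandPos_succ_apply, Equiv.Perm.coe_inv, Equiv.apply_symm_apply]
  omega

end Strands

def strandPairs (n : ℕ) (e : ℕ → ℕ) (w : ℕ → Equiv.Perm ℕ) : Set ((ℕ × ℕ) × ℕ × ℕ) :=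
  {p | p.1 ∈ (Finset.range (n + 1) ×ˢ Finset.range (n + 1)).filter (fun ij => ij.1 < ij.2) ∧
    p.2 ∈ dieSet e w p.1.1 p.1.2 ×ˢ bornSet e w p.1.1 p.1.2}

def diagInversions (n : ℕ) (w : ℕ → Equiv.Perm ℕ) : Set (ℕ × ℕ × ℕ) :=
  {p | p.1 ∈ Finset.Icc 1 n ∧ p.2 ∈ inversions (w p.1)}

section Counting

variable {n : ℕ} {e : ℕ → ℕ} {w : ℕ → Equiv.Perm ℕ}

theorem mem_strandPairs {i j s t : ℕ} :
    ((i, j), s, t) ∈ strandPairs n e w ↔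
      i < j ∧ j ≤ n ∧ s ∈ dieSet e w i j ∧ t ∈ bornSet e w i j := by
  simp only [strandPairs, Finset.mem_filter, Finset.mem_product, Finset.mem_range,
    Set.mem_ofPred_eq, Set.mem_prod]
  constructor
  · rintro ⟨⟨⟨-, hjn⟩, hij⟩, hs, ht⟩
    exact ⟨hij, by omega, hs, ht⟩
  · rintro ⟨hij, hjn, hs, ht⟩
    exact ⟨⟨⟨by omega, by omega⟩, hij⟩, hs, ht⟩

theorem ncard_strandPairs : (strandPairs n e w).ncard = codim n (rank e w) := by
  have hfin : ∀ ij ∈ (Finset.range (n + 1) ×ˢ Finset.range (n + 1)).filter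
      (fun ij => ij.1 < ij.2), (dieSet e w ij.1 ij.2 ×ˢ bornSet e w ij.1 ij.2).Finite := by
    intro ij hij
    replace hij : ij.1 < ij.2 := (Finset.mem_filter.1 hij).2
    exact (aliveOn_finite e w (Nat.le_sub_one_of_lt hij)).sdiff.prod (aliveOn_finite e w hij).sdiff
  unfold strandPairs
  rw [Set.ncard_setOf_fst_mem_snd_mem _ _ hfin, codim, Finset.sum_filter, Finset.sum_product]
  refine Finset.sum_congr rfl fun i _ => Finset.sum_congr rfl fun j _ => ?_
  split_ifs with hij
  · rw [Set.ncard_prod, ncard_dieSet hij, ncard_bornSet hij]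
  · rfl

theorem finite_inversions_of_mem_Icc (hw : ∀ k, 1 ≤ k → k ≤ n → FinSupp (w k)) :
    ∀ k ∈ Finset.Icc 1 n, (inversions (w k)).Finite :=
  fun k hk => (hw k (Finset.mem_Icc.1 hk).1 (Finset.mem_Icc.1 hk).2).finite_inversions

theorem finite_diagInversions (hw : ∀ k, 1 ≤ k → k ≤ n → FinSupp (w k)) :
    (diagInversions n w).Finite :=
  Set.finite_setOf_fst_mem_snd_mem _ _ (finite_inversions_of_mem_Icc hw)

theorem ncard_diagInversions (hw : ∀ k, 1 ≤ k → k ≤ n → FinSupp (w k)) :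
    (diagInversions n w).ncard = diagLength n w :=
  Set.ncard_setOf_fst_mem_snd_mem _ _ (finite_inversions_of_mem_Icc hw)

theorem codim_le_diagLength (hw : ∀ k, 1 ≤ k → k ≤ n → FinSupp (w k)) :
    codim n (rank e w) ≤ diagLength n w := by
  choose! k hk using fun p (hp : p ∈ strandPairs n e w) =>
    exists_inversion_of_mem_dieSet_of_mem_bornSet (Finset.mem_filter.1 hp.1).2 hp.2.1 hp.2.2
  rw [← ncard_strandPairs, ← ncard_diagInversions hw]
  refine Set.ncard_le_ncard_of_injOn
    (fun p => (k p + 1, strandPos w (k p + 1) p.2.2, strandPos w (k p + 1) p.2.1)) ?_ ?_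
    (finite_diagInversions hw)
  · rintro ⟨⟨i, j⟩, s, t⟩ hp
    obtain ⟨-, hkj, hinv⟩ := hk _ hp
    have hjn := (mem_strandPairs.1 hp).2.1
    exact ⟨Finset.mem_Icc.2 ⟨by omega, by dsimp only at hkj; omega⟩, hinv⟩
  · rintro ⟨⟨i, j⟩, s, t⟩ hp ⟨⟨i', j'⟩, s', t'⟩ hp' hpp'
    obtain ⟨hik, hkj, -⟩ := hk _ hp
    obtain ⟨hik', hkj', -⟩ := hk _ hp'
    obtain ⟨-, -, hs, ht⟩ := mem_strandPairs.1 hp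
    obtain ⟨-, -, hs', ht'⟩ := mem_strandPairs.1 hp'
    simp only [Prod.mk.injEq, add_left_inj] at hpp'
    obtain ⟨hkk, htt, hss⟩ := hpp'
    dsimp only at hik hkj hik' hkj'
    rw [hkk] at htt hss
    obtain rfl := (strandPos w _).injective htt
    obtain rfl := (strandPos w _).injective hss
    obtain rfl := eq_of_mem_bornSet ht ht' (by omega) (by omega)
    obtain rfl := eq_of_mem_dieSet hs hs' (by omega) (by omega)
    rfl

end Counting

/-- For `σ = s_j` this is the transformation `(w i, w (i + 1)) ↦ (w i * s_j, s_j * w (i + 1))`. -/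
def moveAcross (w : ℕ → Equiv.Perm ℕ) (i : ℕ) (σ : Equiv.Perm ℕ) : ℕ → Equiv.Perm ℕ :=
  fun k => if k = i then w i * σ else if k = i + 1 then σ⁻¹ * w (i + 1) else w k

section MoveAcross

variable {w : ℕ → Equiv.Perm ℕ} {i : ℕ} {σ : Equiv.Perm ℕ}

theorem strandPos_moveAcross (hi : 1 ≤ i) (k : ℕ) :
    strandPos (moveAcross w i σ) k = if k = i then σ⁻¹ * strandPos w k else strandPos w k := by
  induction k with
  | zero => simp [strandPos, show 0 ≠ i by omega]
  | succ k ih =>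
    simp only [strandPos, ih, moveAcross]
    by_cases hk : k + 1 = i
    · simp [hk, show k ≠ i by omega, mul_assoc]
    by_cases hk' : k = i
    · simp [hk', mul_assoc]
    · simp [hk, hk']

theorem rank_moveAcross {e : ℕ → ℕ} (hi : 1 ≤ i) (hσ : ∀ x, σ x < e i ↔ x < e i) {a b : ℕ}
    (hab : a ≤ b) : rank e (moveAcross w i σ) a b = rank e w a b := by
  have halive : aliveOn e (moveAcross w i σ) a b = aliveOn e w a b := by
    ext x
    simp only [aliveOn, Set.mem_ofPred_eq, strandPos_moveAcross hi]
    refine forall_congr' fun k => imp_congr_right fun _ => imp_congr_right fun _ => ?_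
    split_ifs with hk
    · subst hk
      simpa using (hσ (σ⁻¹ (strandPos w k x))).symm
    · rfl
  rw [rank_eq_ncard_aliveOn _ _ hab, rank_eq_ncard_aliveOn _ _ hab, halive]

theorem finSupp_moveAcross {n : ℕ} (hw : ∀ k, 1 ≤ k → k ≤ n → FinSupp (w k)) (hσ : FinSupp σ) :
    ∀ k, 1 ≤ k → k ≤ n → FinSupp (moveAcross w i σ k) := by
  intro k hk1 hkn
  unfold moveAcross
  split_ifs with hki hki'
  · exact hki ▸ (hw k hk1 hkn).mul hσ
  · exact hki' ▸ hσ.inv.mul (hw k hk1 hkn)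
  · exact hw k hk1 hkn

theorem diagLength_moveAcross_swap_add_two {n j : ℕ} (hw : ∀ k, 1 ≤ k → k ≤ n → FinSupp (w k))
    (hi1 : 1 ≤ i) (hi2 : i + 1 ≤ n) (hd : w i (j + 1) < w i j)
    (hd' : (w (i + 1))⁻¹ (j + 1) < (w (i + 1))⁻¹ j) :
    diagLength n (moveAcross w i (Equiv.swap j (j + 1))) + 2 = diagLength n w := by
  have hell : ∀ k, ell (moveAcross w i (Equiv.swap j (j + 1)) k) +
      ((if i = k then 1 else 0) + (if i + 1 = k then 1 else 0)) = ell (w k) := by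
    intro k
    unfold moveAcross
    split_ifs <;> try omega
    · subst k
      exact ell_mul_swap_add_one (hw i hi1 (by omega)) hd
    · subst k
      rw [Equiv.swap_inv]
      exact ell_swap_mul_add_one (hw (i + 1) (by omega) hi2) hd'
  calc diagLength n (moveAcross w i (Equiv.swap j (j + 1))) + 2
      = ∑ k ∈ Finset.Icc 1 n, (ell (moveAcross w i (Equiv.swap j (j + 1)) k) +
          ((if i = k then 1 else 0) + (if i + 1 = k then 1 else 0))) := by
        rw [Finset.sum_add_distrib, Finset.sum_add_distrib, Finset.sum_ite_eq, Finset.sum_ite_eq,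
          if_pos (Finset.mem_Icc.2 ⟨hi1, by omega⟩), if_pos (Finset.mem_Icc.2 ⟨by omega, hi2⟩)]
        rfl
    _ = diagLength n w := Finset.sum_congr rfl fun k _ => hell k

end MoveAcross

theorem codim_congr {n : ℕ} {r r' : ℕ → ℕ → ℕ} (h : ∀ a b, a ≤ b → r' a b = r a b) :
    codim n r' = codim n r := by
  unfold codim
  refine Finset.sum_congr rfl fun a _ => Finset.sum_congr rfl fun b _ => ?_
  split_ifs with hab
  · rw [h a (b - 1) (by omega), h a b hab.le, h (a + 1) b hab]
  · rfl

theorem minimal_no_double_descent_general (n : ℕ) (e : ℕ → ℕ)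
    (w : ℕ → Equiv.Perm ℕ) (hw : IsMinimal n e w) (i j : ℕ)
    (hi1 : 1 ≤ i) (hi2 : i + 1 ≤ n) (hj : j + 1 < e i) :
    ¬(w i (j + 1) < w i j ∧ (w (i + 1))⁻¹ (j + 1) < (w (i + 1))⁻¹ j) := by
  rintro ⟨hd, hd'⟩
  obtain ⟨⟨-, hlace⟩, hmin⟩ := hw
  have hfs : ∀ k, 1 ≤ k → k ≤ n → FinSupp (w k) := fun k hk1 hkn => (hlace k hk1 hkn).1
  set w' := moveAcross w i (Equiv.swap j (j + 1))
  have hcodim : codim n (rank e w') = codim n (rank e w) :=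
    codim_congr fun a b hab => rank_moveAcross hi1 (fun _ => swap_succ_apply_lt_iff hj) hab
  have hlength : diagLength n w' + 2 = diagLength n w :=
    diagLength_moveAcross_swap_add_two hfs hi1 hi2 hd hd'
  have hbound : codim n (rank e w') ≤ diagLength n w' :=
    codim_le_diagLength (finSupp_moveAcross hfs (FinSupp.swap j (j + 1)))
  omega

/-- in a minimal lace diagram, for `1 ≤ i ≤ n-1` and `1 ≤ j < e i`
(0-indexed: `j + 1 < e i`), it is impossible that both `w i` has a descent at `j`
and `(w (i+1))⁻¹` has a descent at `j`. -/
theorem minimal_no_double_descent (n : ℕ) (hn : 1 ≤ n) (e : ℕ → ℕ)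
    (w : ℕ → Equiv.Perm ℕ) (hw : IsMinimal n e w) (i j : ℕ)
    (hi1 : 1 ≤ i) (hi2 : i + 1 ≤ n) (hj : j + 1 < e i) :
    ¬(w i (j + 1) < w i j ∧ (w (i + 1))⁻¹ (j + 1) < (w (i + 1))⁻¹ j) :=
  minimal_no_double_descent_general n e w hw i j hi1 hi2 hj
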